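/- In the setting of the projection onto safe forests: for every scale assignment n, the map P^n satisfies P^n ∘ P^n = P^n. -/

import Mathlib

/-!
Removing sets from the forest can only enlarge `ℰ^int_ℱ(S)` (every child of `S` in the smaller
forest lies inside a child in the larger one) and `ℰ^ext_ℱ(S)` (fewer ancestors to intersect
over). Hence `int^n` can only drop and `ext^n` can only grow, so a set that is safe in `ℱ` stays
safe in `P^n[ℱ] ⊆ ℱ`. The one exception to "`int^n` can only drop" is `sInf ∅ = 0`; but if
`ℰ^int_ℱ(S)` is empty then, by the crossing hypothesis, `S` has no children, so `S` has no internal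
edges at all.
-/

variable {V ε : Type*}

/-- `ℰ^int(S)`: edges with all endpoints in the node set `S`. -/
def Eint (inc : ε → Set V) (S : Set V) : Set ε := {e | inc e ⊆ S}

/-- `ℰ^ext(S)`: edges touching but not inside `S`. -/
def Eext (inc : ε → Set V) (S : Set V) : Set ε :=
  {e | ¬ inc e ⊆ S ∧ (inc e ∩ S).Nonempty}

/-- `C_ℱ(S)`: the maximal elements of `ℱ` strictly contained in `S`. -/
def childrenF (F : Set (Set V)) (S : Set V) : Set (Set V) :=
  {T | T ∈ F ∧ T ⊂ S ∧ ∀ U ∈ F, T ⊂ U → ¬ U ⊂ S}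

/-- `ℰ^int_ℱ(S) = ℰ^int(S) \ ⋃_{T ∈ C_ℱ(S)} ℰ^int(T)`. -/
def EintF (inc : ε → Set V) (F : Set (Set V)) (S : Set V) : Set ε :=
  Eint inc S \ ⋃ T ∈ childrenF F S, Eint inc T

/-- `ℰ^ext_ℱ(S) = ℰ^ext(S) ∩ ℰ^int(A_ℱ(S))`, where `A_ℱ(S)` is the minimal element of
`ℱ` strictly containing `S` (the intersection over all strict supersets in `ℱ`,
which for a laminar finite family equals `ℰ^int` of the immediate ancestor, and is
everything when there is no ancestor). -/
def EextF (inc : ε → Set V) (F : Set (Set V)) (S : Set V) : Set ε :=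
  Eext inc S ∩ ⋂ T ∈ {T | T ∈ F ∧ S ⊂ T}, Eint inc T

/-- `int^n_ℱ(S)`: the minimum scale over internal edges modulo `ℱ`. -/
noncomputable def intScale (inc : ε → Set V) (n : ε → ℕ) (F : Set (Set V))
    (S : Set V) : ℕ :=
  sInf (n '' EintF inc F S)

/-- `ext^n_ℱ(S)`: the maximum scale over external edges modulo `ℱ`. -/
noncomputable def extScale (inc : ε → Set V) (n : ε → ℕ) (F : Set (Set V))
    (S : Set V) : ℕ :=
  sSup (n '' EextF inc F S)

/-- `P^n[ℱ]`: the projection onto safe forests. -/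
noncomputable def safeProj (inc : ε → Set V) (n : ε → ℕ) (F : Set (Set V)) :
    Set (Set V) :=
  {S ∈ F | intScale inc n F S ≤ extScale inc n F S}

lemma exists_mem_childrenF_superset {F : Set (Set V)} (hF : F.Finite) {S T : Set V}
    (hT : T ∈ F) (hTS : T ⊂ S) : ∃ U ∈ childrenF F S, T ⊆ U := by
  have hfin : {U | U ∈ F ∧ T ⊆ U ∧ U ⊂ S}.Finite := hF.subset fun U hU => hU.1
  obtain ⟨U, ⟨hUF, hTU, hUS⟩, hmax⟩ :=
    hfin.exists_maximalFor id _ ⟨T, hT, subset_rfl, hTS⟩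
  refine ⟨U, ⟨hUF, hUS, fun W hW hUW hWS => hUW.2 ?_⟩, hTU⟩
  exact hmax (j := W) ⟨hW, hTU.trans hUW.1, hWS⟩ hUW.1

lemma EextF_subset_EextF_of_subset (inc : ε → Set V) {F F' : Set (Set V)} (hF' : F' ⊆ F)
    (S : Set V) : EextF inc F S ⊆ EextF inc F' S := by
  rintro e ⟨he_ext, he_anc⟩
  simp only [Set.mem_iInter] at he_anc
  exact ⟨he_ext, Set.mem_iInter₂.2 fun T hT => he_anc T ⟨hF' hT.1, hT.2⟩⟩

lemma EintF_subset_EintF_of_subset (inc : ε → Set V) {F F' : Set (Set V)} (hF : F.Finite)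
    (hF' : F' ⊆ F) (S : Set V) : EintF inc F S ⊆ EintF inc F' S := by
  rintro e ⟨he_int, he_child⟩
  refine ⟨he_int, fun he' => he_child ?_⟩
  obtain ⟨T, hT, heT⟩ := Set.mem_iUnion₂.1 he'
  obtain ⟨U, hU, hTU⟩ := exists_mem_childrenF_superset hF (hF' hT.1) hT.2.1
  exact Set.mem_iUnion₂.2 ⟨U, hU, heT.trans hTU⟩

/-- By laminarity, a child of `S` containing such an edge would contain `T` or be disjoint
from it. -/
lemma mem_EintF_of_mem_childrenF {inc : ε → Set V} {F : Set (Set V)}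
    (hlam : ∀ S ∈ F, ∀ T ∈ F, S ⊆ T ∨ T ⊆ S ∨ S ∩ T = ∅) {S T : Set V} {e : ε}
    (hT : T ∈ childrenF F S) (he : e ∈ Eext inc T ∩ Eint inc S) : e ∈ EintF inc F S := by
  obtain ⟨⟨he_out, x, hxe, hxT⟩, he_int⟩ := he
  refine ⟨he_int, fun he' => ?_⟩
  obtain ⟨T', hT', heT'⟩ := Set.mem_iUnion₂.1 he'
  rcases hlam T hT.1 T' hT'.1 with hTT' | hT'T | hdisj
  · rcases hTT'.eq_or_ssubset with rfl | hss
    · exact he_out heT'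
    · exact hT.2.2 T' hT'.1 hss hT'.2.1
  · exact he_out (heT'.trans hT'T)
  · exact Set.eq_empty_iff_forall_notMem.1 hdisj x ⟨hxT, heT' hxe⟩

lemma Eint_eq_empty_of_EintF_eq_empty {inc : ε → Set V} {F : Set (Set V)}
    (hlam : ∀ S ∈ F, ∀ T ∈ F, S ⊆ T ∨ T ⊆ S ∨ S ∩ T = ∅)
    (hcross : ∀ S ∈ F, ∀ T ∈ F, S ⊂ T → (Eext inc S ∩ Eint inc T).Nonempty)
    {S : Set V} (hS : S ∈ F) (hempty : EintF inc F S = ∅) : Eint inc S = ∅ := by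
  have hno_child : childrenF F S = ∅ := by
    refine Set.eq_empty_iff_forall_notMem.2 fun T hT => ?_
    obtain ⟨e, he⟩ := hcross T hT.1 S hS hT.2.1
    exact hempty.subset (mem_EintF_of_mem_childrenF hlam hT he)
  simpa [EintF, hno_child] using hempty

lemma intScale_le_intScale_of_subset {inc : ε → Set V} (n : ε → ℕ) {F F' : Set (Set V)}
    (hF : F.Finite) (hlam : ∀ S ∈ F, ∀ T ∈ F, S ⊆ T ∨ T ⊆ S ∨ S ∩ T = ∅)
    (hcross : ∀ S ∈ F, ∀ T ∈ F, S ⊂ T → (Eext inc S ∩ Eint inc T).Nonempty)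
    (hF' : F' ⊆ F) {S : Set V} (hS : S ∈ F) : intScale inc n F' S ≤ intScale inc n F S := by
  rcases (EintF inc F S).eq_empty_or_nonempty with hempty | hne
  · have hEint := Eint_eq_empty_of_EintF_eq_empty hlam hcross hS hempty
    have hempty' : EintF inc F' S = ∅ := Set.subset_empty_iff.1 (hEint ▸ Set.sdiff_subset)
    simp [intScale, hempty']
  · exact Nat.sInf_le <|
      Set.image_mono (EintF_subset_EintF_of_subset inc hF hF' S) (Nat.sInf_mem (hne.image n))

lemma extScale_le_extScale_of_subset [Finite ε] (inc : ε → Set V) (n : ε → ℕ)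
    {F F' : Set (Set V)} (hF' : F' ⊆ F) (S : Set V) :
    extScale inc n F S ≤ extScale inc n F' S :=
  csSup_le_csSup' (Set.toFinite _).bddAbove
    (Set.image_mono (EextF_subset_EextF_of_subset inc hF' S))

theorem safeProj_idempotent_general [Finite ε] (inc : ε → Set V) (n : ε → ℕ)
    (F : Set (Set V)) (hFfin : F.Finite)
    (hlam : ∀ S ∈ F, ∀ T ∈ F, S ⊆ T ∨ T ⊆ S ∨ S ∩ T = ∅)
    (hcross : ∀ S ∈ F, ∀ T ∈ F, S ⊂ T → (Eext inc S ∩ Eint inc T).Nonempty) :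
    safeProj inc n (safeProj inc n F) = safeProj inc n F := by
  have hsub : safeProj inc n F ⊆ F := fun S hS => hS.1
  refine (Set.sep_subset _ _).antisymm fun S hS => ⟨hS, ?_⟩
  calc intScale inc n (safeProj inc n F) S
      ≤ intScale inc n F S := intScale_le_intScale_of_subset n hFfin hlam hcross hsub hS.1
    _ ≤ extScale inc n F S := hS.2
    _ ≤ extScale inc n (safeProj inc n F) S := extScale_le_extScale_of_subset inc n hsub S

/-- The projection onto safe forests is idempotent:
`P^n ∘ P^n = P^n` (for every scale assignment `n`). -/
theorem safeProj_idempotent [Finite ε] (inc : ε → Set V) (n : ε → ℕ)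
    (F : Set (Set V)) (hFfin : F.Finite)
    (hlam : ∀ S ∈ F, ∀ T ∈ F, S ⊆ T ∨ T ⊆ S ∨ S ∩ T = ∅)
    (hcross : ∀ S ∈ F, ∀ T ∈ F, S ⊂ T → (Eext inc S ∩ Eint inc T).Nonempty)
    (hext : ∀ S ∈ F, (Eext inc S).Nonempty) :
    safeProj inc n (safeProj inc n F) = safeProj inc n F :=
  safeProj_idempotent_general inc n F hFfin hlam hcross
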